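/- Define h(λ) = ∫₀^1 ((t+1)^{-2λ} + (1−t)^{-2λ})(t²−1)exp(−t²/2) dt for λ ∈ (0, 1/2). Then h is strictly decreasing on (0, 1/2) and h(λ) < lim_{μ→0⁺} h(μ) = −2·exp(−1/2) for all λ ∈ (0, 1/2). -/

import Mathlib

open Real MeasureTheory Set Filter

/-!
For fixed `t ∈ (0, 1)` the weight `λ ↦ (1 + t) ^ (-2λ) + (1 - t) ^ (-2λ)` is strictly increasing
on `[0, ∞)`: since `(1 + t) (1 - t) < 1`, the growth of the second term beats the decay of the
first. As `(t² - 1) exp (-t² / 2) < 0`, the integrand, and hence `h`, is strictly decreasing on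
`[0, 1/2)`.
Absorbing the factor `1 - t` of `t² - 1` into `(1 - t) ^ (-2λ)` bounds the integrand uniformly, so
dominated convergence makes `h` right-continuous at `0`, and `h 0 = [-2t exp (-t² / 2)]₀¹`.
-/

lemma strictMonoOn_rpow_neg_add_rpow_neg {x y : ℝ} (hy0 : 0 < y) (hy : y ≤ 1) (hx : 1 ≤ x)
    (hxy : x * y < 1) : StrictMonoOn (fun s => x ^ (-s) + y ^ (-s)) (Ici (0 : ℝ)) := by
  intro a ha b _ hab
  obtain ⟨d, hd, rfl⟩ : ∃ d, 0 < d ∧ b = a + d := ⟨b - a, by linarith, by ring⟩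
  have hx0 : 0 < x := by linarith
  have split : ∀ z : ℝ, 0 < z → z ^ (-(a + d)) = z ^ (-a) * z ^ (-d) := fun z hz => by
    rw [neg_add, rpow_add hz]
  simp only [split x hx0, split y hy0]
  have hxa : x ^ (-a) ≤ 1 := rpow_le_one_of_one_le_of_nonpos hx (neg_nonpos.2 ha)
  have hxd : x ^ (-d) ≤ 1 := rpow_le_one_of_one_le_of_nonpos hx (by linarith)
  have hya : 1 ≤ y ^ (-a) := one_le_rpow_of_pos_of_le_one_of_nonpos hy0 hy (neg_nonpos.2 ha)
  have hyd : 1 ≤ y ^ (-d) := one_le_rpow_of_pos_of_le_one_of_nonpos hy0 hy (by linarith)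
  have hprod : 1 < x ^ (-d) * y ^ (-d) := by
    rw [← mul_rpow hx0.le hy0.le]
    exact one_lt_rpow_of_pos_of_lt_one_of_neg (by positivity) hxy (by linarith)
  have hsum : 2 < x ^ (-d) + y ^ (-d) := by
    nlinarith [sq_nonneg (x ^ (-d) - y ^ (-d)), rpow_pos_of_pos hx0 (-d), rpow_pos_of_pos hy0 (-d)]
  -- `x ^ (-a) (x ^ (-d) - 1) + y ^ (-a) (y ^ (-d) - 1) ≥ (x ^ (-d) - 1) + (y ^ (-d) - 1) > 0`
  nlinarith [mul_nonneg (sub_nonneg.2 hxa) (sub_nonneg.2 hxd),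
    mul_nonneg (sub_nonneg.2 hya) (sub_nonneg.2 hyd)]

noncomputable def integrand (l t : ℝ) : ℝ :=
  ((t + 1) ^ (-(2 * l)) + (1 - t) ^ (-(2 * l))) * (t ^ 2 - 1) * exp (-t ^ 2 / 2)

lemma integrand_one (l : ℝ) : integrand l 1 = 0 := by simp [integrand]

lemma integrand_zero (t : ℝ) : integrand 0 t = (2 * t ^ 2 - 2) * exp (-t ^ 2 / 2) := by
  simp only [integrand, mul_zero, neg_zero, rpow_zero]
  ring

lemma integrand_strictAntiOn {t : ℝ} (ht : t ∈ Ioo (0 : ℝ) 1) :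
    StrictAntiOn (fun l => integrand l t) (Ici 0) := by
  intro a ha b hb hab
  have hmono := strictMonoOn_rpow_neg_add_rpow_neg (x := t + 1) (y := 1 - t) (by linarith [ht.2])
    (by linarith [ht.1]) (by linarith [ht.1]) (by nlinarith [ht.1, ht.2])
    (mem_Ici.2 (by linarith [mem_Ici.1 ha] : (0 : ℝ) ≤ 2 * a))
    (mem_Ici.2 (by linarith [mem_Ici.1 hb] : (0 : ℝ) ≤ 2 * b)) (by linarith)
  have hneg : (t ^ 2 - 1) * exp (-t ^ 2 / 2) < 0 :=
    mul_neg_of_neg_of_pos (by nlinarith [ht.1, ht.2]) (exp_pos _)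
  simpa only [integrand, mul_assoc] using mul_lt_mul_of_neg_right hmono hneg

lemma integrand_eq_of_le_one {l t : ℝ} (hl : l < 1 / 2) (ht : t ≤ 1) :
    integrand l t =
      -(((t + 1) ^ (-(2 * l)) * (1 - t) + (1 - t) ^ (1 - 2 * l)) * (1 + t)) *
        exp (-t ^ 2 / 2) := by
  rw [show 1 - 2 * l = -(2 * l) + 1 by ring, rpow_add_one' (by linarith) (by linarith), integrand]
  ring

lemma continuousOn_integrand {l : ℝ} (hl : l < 1 / 2) : ContinuousOn (integrand l) (Icc 0 1) := by
  refine ContinuousOn.congr ?_ fun t ht => integrand_eq_of_le_one hl ht.2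
  have h1 : ContinuousOn (fun t : ℝ => (t + 1) ^ (-(2 * l))) (Icc 0 1) :=
    ContinuousOn.rpow_const (by fun_prop) fun t ht => Or.inl (by linarith [ht.1])
  have h2 : ContinuousOn (fun t : ℝ => (1 - t) ^ (1 - 2 * l)) (Icc 0 1) :=
    (Continuous.rpow_const (by fun_prop) fun _ => Or.inr (by linarith)).continuousOn
  fun_prop

lemma continuous_integrand_left {t : ℝ} (ht : t ∈ Ioo (-1 : ℝ) 1) :
    Continuous fun l => integrand l t := by
  have h1 : Continuous fun l : ℝ => (t + 1) ^ (-(2 * l)) :=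
    continuous_const.rpow (by fun_prop) fun _ => Or.inl (by linarith [ht.1])
  have h2 : Continuous fun l : ℝ => (1 - t) ^ (-(2 * l)) :=
    continuous_const.rpow (by fun_prop) fun _ => Or.inl (by linarith [ht.2])
  unfold integrand
  fun_prop

lemma norm_integrand_le {l t : ℝ} (hl : l ∈ Ico (0 : ℝ) (1 / 2)) (ht : t ∈ Icc (0 : ℝ) 1) :
    ‖integrand l t‖ ≤ 4 := by
  obtain ⟨hl0, hl2⟩ := hl
  obtain ⟨ht0, ht1⟩ := ht
  rw [integrand_eq_of_le_one hl2 ht1]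
  have hA0 : 0 ≤ (t + 1) ^ (-(2 * l)) := rpow_nonneg (by linarith) _
  have hA1 : (t + 1) ^ (-(2 * l)) ≤ 1 :=
    rpow_le_one_of_one_le_of_nonpos (by linarith) (by linarith)
  have hC0 : 0 ≤ (1 - t) ^ (1 - 2 * l) := rpow_nonneg (by linarith) _
  have hC1 : (1 - t) ^ (1 - 2 * l) ≤ 1 := rpow_le_one (by linarith) (by linarith) (by linarith)
  have he0 : 0 < exp (-t ^ 2 / 2) := exp_pos _
  have he1 : exp (-t ^ 2 / 2) ≤ 1 := exp_le_one_iff.2 (by nlinarith)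
  rw [norm_mul, norm_neg, norm_mul, Real.norm_of_nonneg (by positivity),
    Real.norm_of_nonneg (by linarith), Real.norm_of_nonneg he0.le]
  have : (t + 1) ^ (-(2 * l)) * (1 - t) + (1 - t) ^ (1 - 2 * l) ≤ 2 := by nlinarith
  have hlt2 : 1 + t ≤ 2 := by linarith
  calc ((t + 1) ^ (-(2 * l)) * (1 - t) + (1 - t) ^ (1 - 2 * l)) * (1 + t) *
        exp (-t ^ 2 / 2) ≤ 2 * 2 * 1 := by gcongr
    _ = 4 := by norm_num

lemma strictAntiOn_integral_integrand :
    StrictAntiOn (fun l => ∫ t in (0 : ℝ)..1, integrand l t) (Ico 0 (1 / 2)) := by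
  intro a ha b hb hab
  refine intervalIntegral.integral_lt_integral_of_continuousOn_of_le_of_exists_lt one_pos
    (continuousOn_integrand hb.2) (continuousOn_integrand ha.2) (fun t ht => ?_)
    ⟨1 / 2, by norm_num, integrand_strictAntiOn (by norm_num) ha.1 hb.1 hab⟩
  rcases ht.2.eq_or_lt with rfl | ht1
  · simp only [integrand_one, le_refl]
  · exact (integrand_strictAntiOn ⟨ht.1, ht1⟩ ha.1 hb.1 hab).le

lemma integral_integrand_zero : ∫ t in (0 : ℝ)..1, integrand 0 t = -2 * exp (-(1 / 2)) := by
  have hderiv : ∀ t : ℝ, HasDerivAt (fun t => -2 * t * exp (-t ^ 2 / 2)) (integrand 0 t) t := by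
    intro t
    have hquad : HasDerivAt (fun t : ℝ => -t ^ 2 / 2) (-t) t :=
      ((hasDerivAt_pow 2 t).neg.div_const 2).congr_deriv (by push_cast; ring)
    rw [integrand_zero]
    exact (((hasDerivAt_id t).const_mul (-2)).mul hquad.exp).congr_deriv
      (by simp only [id_eq]; ring)
  rw [intervalIntegral.integral_eq_sub_of_hasDerivAt (fun t _ => hderiv t)
    ((continuousOn_integrand (by norm_num)).intervalIntegrable_of_Icc zero_le_one)]
  norm_num

lemma tendsto_integral_integrand :
    Tendsto (fun l => ∫ t in (0 : ℝ)..1, integrand l t) (nhdsWithin 0 (Ioi 0))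
      (nhds (∫ t in (0 : ℝ)..1, integrand 0 t)) := by
  refine intervalIntegral.tendsto_integral_filter_of_dominated_convergence (fun _ => 4)
    (Eventually.of_forall fun l => ?_) ?_ intervalIntegrable_const ?_
  · exact (by unfold integrand; fun_prop : Measurable (integrand l)).aestronglyMeasurable
  · filter_upwards [Ioo_mem_nhdsGT (by norm_num : (0 : ℝ) < 1 / 2)] with l hl
    refine Eventually.of_forall fun t ht => norm_integrand_le (Ioo_subset_Ico_self hl) ?_
    rw [uIoc_of_le zero_le_one] at ht
    exact Ioc_subset_Icc_self ht
  · refine Eventually.of_forall fun t ht => ?_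
    rw [uIoc_of_le zero_le_one] at ht
    rcases ht.2.eq_or_lt with rfl | ht1
    · simpa only [integrand_one] using tendsto_const_nhds
    · exact (continuous_integrand_left ⟨by linarith [ht.1], ht1⟩).continuousWithinAt

theorem stmt_11
    (h : ℝ → ℝ)
    (hh : ∀ l : ℝ, h l =
      ∫ t in (0:ℝ)..1, ((t+1) ^ (-(2*l)) + (1-t) ^ (-(2*l))) * (t^2 - 1) * Real.exp (-t^2/2)) :
    StrictAntiOn h (Ioo 0 (1/2)) ∧
    Tendsto h (nhdsWithin 0 (Ioi 0)) (nhds (-2 * Real.exp (-(1/2)))) ∧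
    ∀ l ∈ Ioo (0:ℝ) (1/2), h l < -2 * Real.exp (-(1/2)) := by
  obtain rfl : h = fun l => ∫ t in (0 : ℝ)..1, integrand l t := funext hh
  rw [← integral_integrand_zero]
  refine ⟨strictAntiOn_integral_integrand.mono Ioo_subset_Ico_self, tendsto_integral_integrand,
    fun l hl => ?_⟩
  exact strictAntiOn_integral_integrand (by norm_num) (Ioo_subset_Ico_self hl) hl.1
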